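/- Let R be a finite direct product of integral domains and H a Hopf algebra over R that is projective as an R-module. If H contains a non-zero left or right integral t with Ann_R(t) = 0, then H is finitely generated as an R-module. -/

import Mathlib

/-!
Let `C ⊆ H` be the submodule of right legs `(f ⊗ id)(Δ t)`, `f ∈ H^*`, of `Δ t`; it lies in a
finitely generated submodule. For a left integral `(1 ⊗ h) Δ t = (S h ⊗ 1) Δ t`, so `C` is a
left ideal; coassociativity and projectivity give `Δ C ⊆ H ⊗ C`, whence
`ε(c) 1 = ∑ S(c₁) c₂ ∈ C` for `c ∈ C`. As `ε((f ⊗ id) Δ t) = f t`, this gives `f(t) H ⊆ C` for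
every `f ∈ H^*`. Since `H` is projective and `Ann(t) = 0`, the ideal of values `f t` has zero
annihilator, so over a finite product of domains it contains a non-zero-divisor `r`. A projective
module `M` with `r M` inside a finitely generated submodule is finitely generated. Right
integrals are handled by the mirror argument with left legs.
-/

universe u v

/-- A left integral: `h * t = ε(h) • t` for all `h`. -/
def IsLeftIntegral (R : Type u) {H : Type v} [CommRing R] [Ring H] [HopfAlgebra R H]
    (t : H) : Prop :=
  ∀ h : H, h * t = Coalgebra.counit (R := R) h • t

/-- A right integral: `t * h = ε(h) • t` for all `h`. -/
def IsRightIntegral (R : Type u) {H : Type v} [CommRing R] [Ring H] [HopfAlgebra R H]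
    (t : H) : Prop :=
  ∀ h : H, t * h = Coalgebra.counit (R := R) h • t

open TensorProduct Coalgebra HopfAlgebra WithConv LinearMap

theorem Pi.exists_mem_nonZeroDivisors_of_annihilator_eq_bot {ι : Type*} [Finite ι]
    {Rf : ι → Type*} [∀ i, CommRing (Rf i)] [∀ i, IsDomain (Rf i)] {I : Ideal (∀ i, Rf i)}
    (hI : I.annihilator = ⊥) : ∃ r ∈ I, r ∈ nonZeroDivisors (∀ i, Rf i) := by
  classical
  have := Fintype.ofFinite ι
  have hcoord : ∀ i, ∃ x ∈ I, x i ≠ 0 := by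
    intro i
    by_contra! hi
    have hmem : Pi.single i 1 ∈ I.annihilator := Submodule.mem_annihilator.mpr fun x hx ↦ by
      ext j
      by_cases hj : j = i
      · subst hj; simp [hi x hx]
      · simp [Pi.single_eq_of_ne hj]
    simpa using congr_fun (hI ▸ hmem : Pi.single i (1 : Rf i) ∈ (⊥ : Ideal _)) i
  choose x hxI hx using hcoord
  refine ⟨fun i ↦ x i i, ?_, mem_nonZeroDivisors_iff_left.mpr fun a ha ↦ ?_⟩
  · have hsum : (fun i ↦ x i i) = ∑ i, Pi.single i 1 * x i := by
      ext j
      rw [Finset.sum_apply,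
        Finset.sum_eq_single j (fun i _ hij ↦ by simp [Pi.single_eq_of_ne' hij]) (by simp),
        Pi.mul_apply, Pi.single_eq_same, one_mul]
    rw [hsum]
    exact I.sum_mem fun i _ ↦ I.mul_mem_left _ (hxI i)
  · ext i
    exact (mul_eq_zero.mp (congr_fun ha i)).resolve_left (hx i)

theorem Module.Projective.finite_of_forall_smul_mem {R M : Type*} [CommRing R] [AddCommGroup M]
    [Module R M] [Module.Projective R M] {r : R} (hr : r ∈ nonZeroDivisors R) {N : Submodule R M}
    (hN : N.FG) (hrN : ∀ x : M, r • x ∈ N) : Module.Finite R M := by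
  classical
  obtain ⟨s, hs⟩ := Module.projective_def'.mp ‹Module.Projective R M›
  obtain ⟨G, rfl⟩ := hN
  set T : Finset M := G.biUnion fun g ↦ (s g).support
  have hsT : ∀ x ∈ Submodule.span R (G : Set M), s x ∈ Finsupp.supported R R (T : Set M) := by
    intro x hx
    refine (Submodule.span_le.mpr ?_ : _ ≤ (Finsupp.supported R R (T : Set M)).comap s) hx
    intro g hg
    exact (Finsupp.mem_supported R _).mpr fun j hj ↦ Finset.mem_biUnion.mpr ⟨g, hg, hj⟩
  refine ⟨⟨T, eq_top_iff.mpr fun x _ ↦ ?_⟩⟩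
  have hx : s x ∈ Finsupp.supported R R (T : Set M) := by
    refine (Finsupp.mem_supported' R _).mpr fun j hj ↦ ?_
    have := (Finsupp.mem_supported' R _).mp (hsT _ (hrN x)) j hj
    rw [map_smul, Finsupp.smul_apply, smul_eq_mul] at this
    exact (mem_nonZeroDivisors_iff_left.mp hr) _ this
  rw [← Set.image_id (T : Set M), Finsupp.mem_span_image_iff_linearCombination]
  exact ⟨s x, hx, congr($hs x)⟩

namespace TensorProduct

variable {R M N P : Type*} [CommRing R] [AddCommGroup M] [Module R M] [AddCommGroup N] [Module R N]
  [AddCommGroup P] [Module R P]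

def applyLeft (f : Module.Dual R M) : M ⊗[R] N →ₗ[R] N :=
  (TensorProduct.lid R N).toLinearMap ∘ₗ f.rTensor N

def applyRight (g : Module.Dual R N) : M ⊗[R] N →ₗ[R] M :=
  (TensorProduct.rid R M).toLinearMap ∘ₗ g.lTensor M

@[simp] lemma applyLeft_tmul (f : Module.Dual R M) (m : M) (n : N) :
    applyLeft f (m ⊗ₜ[R] n) = f m • n := by
  simp [applyLeft]

@[simp] lemma applyRight_tmul (g : Module.Dual R N) (m : M) (n : N) :
    applyRight g (m ⊗ₜ[R] n) = g n • m := by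
  simp [applyRight]

lemma applyLeft_lTensor (f : Module.Dual R M) (g : N →ₗ[R] P) (z : M ⊗[R] N) :
    applyLeft f (g.lTensor M z) = g (applyLeft f z) := by
  induction z using TensorProduct.induction_on with
  | zero => simp
  | tmul m n => simp
  | add z₁ z₂ h₁ h₂ => simp only [map_add, h₁, h₂]

lemma applyRight_rTensor (g : Module.Dual R N) (f : M →ₗ[R] P) (z : M ⊗[R] N) :
    applyRight g (f.rTensor N z) = f (applyRight g z) := by
  induction z using TensorProduct.induction_on with
  | zero => simp
  | tmul m n => simp
  | add z₁ z₂ h₁ h₂ => simp only [map_add, h₁, h₂]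

lemma applyLeft_rTensor (f : Module.Dual R P) (g : M →ₗ[R] P) (z : M ⊗[R] N) :
    applyLeft f (g.rTensor N z) = applyLeft (f ∘ₗ g) z := by
  rw [applyLeft, applyLeft, rTensor_comp, comp_apply, comp_apply, comp_apply]

lemma applyRight_lTensor (g : Module.Dual R P) (f : N →ₗ[R] P) (z : M ⊗[R] N) :
    applyRight g (f.lTensor M z) = applyRight (g ∘ₗ f) z := by
  rw [applyRight, applyRight, lTensor_comp, comp_apply, comp_apply, comp_apply]

lemma applyRight_eq_applyLeft_comm (g : Module.Dual R N) (z : M ⊗[R] N) :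
    applyRight g z = applyLeft g (TensorProduct.comm R M N z) := by
  induction z using TensorProduct.induction_on with
  | zero => simp
  | tmul m n => simp
  | add z₁ z₂ h₁ h₂ => simp only [map_add, h₁, h₂]

def rightCoeffs (z : M ⊗[R] N) : Submodule R N where
  carrier := Set.range fun f : Module.Dual R M ↦ applyLeft f z
  add_mem' := by
    rintro _ _ ⟨f, rfl⟩ ⟨g, rfl⟩
    exact ⟨f + g, by simp [applyLeft, rTensor_add]⟩
  zero_mem' := ⟨0, by simp [applyLeft]⟩
  smul_mem' := by
    rintro a _ ⟨f, rfl⟩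
    exact ⟨a • f, by simp [applyLeft, rTensor_smul]⟩

def leftCoeffs (z : M ⊗[R] N) : Submodule R M where
  carrier := Set.range fun g : Module.Dual R N ↦ applyRight g z
  add_mem' := by
    rintro _ _ ⟨f, rfl⟩ ⟨g, rfl⟩
    exact ⟨f + g, by simp [applyRight, lTensor_add]⟩
  zero_mem' := ⟨0, by simp [applyRight]⟩
  smul_mem' := by
    rintro a _ ⟨f, rfl⟩
    exact ⟨a • f, by simp [applyRight, lTensor_smul]⟩

lemma applyLeft_mem_rightCoeffs (f : Module.Dual R M) (z : M ⊗[R] N) :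
    applyLeft f z ∈ rightCoeffs z :=
  ⟨f, rfl⟩

lemma applyRight_mem_leftCoeffs (g : Module.Dual R N) (z : M ⊗[R] N) :
    applyRight g z ∈ leftCoeffs z :=
  ⟨g, rfl⟩

lemma leftCoeffs_eq_rightCoeffs_comm (z : M ⊗[R] N) :
    leftCoeffs z = rightCoeffs (TensorProduct.comm R M N z) := by
  ext m
  exact exists_congr fun g ↦ by simp only [applyRight_eq_applyLeft_comm]

lemma rightCoeffs_le_of_mem_range {z : M ⊗[R] N} {K : Submodule R N}
    (hz : z ∈ range (K.subtype.lTensor M)) : rightCoeffs z ≤ K := by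
  obtain ⟨w, rfl⟩ := hz
  rintro _ ⟨f, rfl⟩
  simp [applyLeft_lTensor]

lemma eq_zero_of_forall_applyLeft_eq_zero [Module.Projective R M] {z : M ⊗[R] N}
    (h : ∀ f : Module.Dual R M, applyLeft f z = 0) : z = 0 := by
  classical
  obtain ⟨s, hs⟩ := Module.projective_def'.mp ‹Module.Projective R M›
  have hsz : finsuppScalarLeft R N M (s.rTensor N z) = 0 := by
    ext j
    rw [finsuppScalarLeft_apply, ← rTensor_comp_apply]
    exact h _
  calc z = (Finsupp.linearCombination R _root_.id).rTensor N (s.rTensor N z) := by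
        rw [← rTensor_comp_apply, hs, rTensor_id, id_apply]
    _ = 0 := by rw [(LinearEquiv.map_eq_zero_iff _).mp hsz, map_zero]

lemma rightCoeffs_le_iff [Module.Projective R M] {z : M ⊗[R] N} {K : Submodule R N} :
    rightCoeffs z ≤ K ↔ z ∈ range (K.subtype.lTensor M) := by
  refine ⟨fun hK ↦ ?_, rightCoeffs_le_of_mem_range⟩
  rw [← (lTensor_exact M (exact_subtype_mkQ K) K.mkQ_surjective).linearMap_ker_eq, mem_ker]
  refine eq_zero_of_forall_applyLeft_eq_zero fun f ↦ ?_
  rw [applyLeft_lTensor, Submodule.mkQ_apply, Submodule.Quotient.mk_eq_zero]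
  exact hK (applyLeft_mem_rightCoeffs f z)

lemma comm_mem_range_lTensor_iff {g : P →ₗ[R] M} {z : M ⊗[R] N} :
    TensorProduct.comm R M N z ∈ range (g.lTensor N) ↔ z ∈ range (g.rTensor N) := by
  constructor
  · rintro ⟨w, hw⟩
    exact ⟨TensorProduct.comm R N P w, by rw [rTensor_comm, hw, comm_comm]⟩
  · rintro ⟨w, rfl⟩
    exact ⟨TensorProduct.comm R P N w, lTensor_comm g w⟩

lemma leftCoeffs_le_of_mem_range {z : M ⊗[R] N} {K : Submodule R M}
    (hz : z ∈ range (K.subtype.rTensor N)) : leftCoeffs z ≤ K := by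
  rw [leftCoeffs_eq_rightCoeffs_comm]
  exact rightCoeffs_le_of_mem_range (comm_mem_range_lTensor_iff.mpr hz)

lemma leftCoeffs_le_iff [Module.Projective R N] {z : M ⊗[R] N} {K : Submodule R M} :
    leftCoeffs z ≤ K ↔ z ∈ range (K.subtype.rTensor N) := by
  rw [leftCoeffs_eq_rightCoeffs_comm, rightCoeffs_le_iff, comm_mem_range_lTensor_iff]

lemma applyLeft_applyLeft_assoc (f : Module.Dual R M) (g : Module.Dual R N)
    (w : (M ⊗[R] N) ⊗[R] P) :
    applyLeft g (applyLeft f (TensorProduct.assoc R M N P w)) =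
      applyLeft (mul' R R ∘ₗ map f g) w := by
  have : applyLeft g ∘ₗ applyLeft f ∘ₗ (TensorProduct.assoc R M N P).toLinearMap =
      applyLeft (mul' R R ∘ₗ map f g) :=
    TensorProduct.ext_threefold fun x y z ↦ by simp [smul_smul]
  exact congr($this w)

lemma applyRight_applyRight_assoc_symm (f : Module.Dual R N)
    (g : Module.Dual R P) (w : M ⊗[R] (N ⊗[R] P)) :
    applyRight f (applyRight g ((TensorProduct.assoc R M N P).symm w)) =
      applyRight (mul' R R ∘ₗ map f g) w := by
  have : applyRight f ∘ₗ applyRight g ∘ₗ (TensorProduct.assoc R M N P).symm.toLinearMap =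
      applyRight (mul' R R ∘ₗ map f g) :=
    TensorProduct.ext_threefold' fun x y z ↦ by simp [smul_smul, mul_comm]
  exact congr($this w)

lemma exists_fg_rightCoeffs_le (z : M ⊗[R] N) :
    ∃ K : Submodule R N, K.FG ∧ rightCoeffs z ≤ K := by
  obtain ⟨K, hK, hz⟩ := exists_finite_submodule_right_of_setFinite {z} (Set.finite_singleton z)
  exact ⟨K, Module.Finite.iff_fg.mp hK, rightCoeffs_le_of_mem_range (hz rfl)⟩

lemma exists_fg_leftCoeffs_le (z : M ⊗[R] N) :
    ∃ K : Submodule R M, K.FG ∧ leftCoeffs z ≤ K := by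
  obtain ⟨K, hK, hz⟩ := exists_finite_submodule_left_of_setFinite {z} (Set.finite_singleton z)
  exact ⟨K, Module.Finite.iff_fg.mp hK, leftCoeffs_le_of_mem_range (hz rfl)⟩

end TensorProduct

namespace Algebra.TensorProduct

variable {R A B : Type*} [CommSemiring R] [Semiring A] [Algebra R A] [Semiring B] [Algebra R B]

lemma tmul_one_mul_eq_rTensor (a : A) (z : A ⊗[R] B) :
    (a ⊗ₜ[R] (1 : B)) * z = (mulLeft R a).rTensor B z := by
  rw [← mulLeft_apply (R := R), LinearMap.mulLeft_tmul, mulLeft_one]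
  rfl

lemma one_tmul_mul_eq_lTensor (b : B) (z : A ⊗[R] B) :
    ((1 : A) ⊗ₜ[R] b) * z = (mulLeft R b).lTensor A z := by
  rw [← mulLeft_apply (R := R), LinearMap.mulLeft_tmul, mulLeft_one]
  rfl

lemma mul_tmul_one_eq_rTensor (a : A) (z : A ⊗[R] B) :
    z * (a ⊗ₜ[R] (1 : B)) = (mulRight R a).rTensor B z := by
  rw [← mulRight_apply (R := R), LinearMap.mulRight_tmul, mulRight_one]
  rfl

lemma mul_one_tmul_eq_lTensor (b : B) (z : A ⊗[R] B) :
    z * ((1 : A) ⊗ₜ[R] b) = (mulRight R b).lTensor A z := by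
  rw [← mulRight_apply (R := R), LinearMap.mulRight_tmul, mulRight_one]
  rfl

end Algebra.TensorProduct

namespace LinearMap

variable {R C A : Type*} [CommSemiring R] [AddCommMonoid C] [Module R C] [CoalgebraStruct R C]
  [Semiring A] [Algebra R A]

lemma convMul_mulRight_comp (f g : WithConv (C →ₗ[R] A)) (x : A) :
    f * toConv (mulRight R x ∘ₗ g.ofConv) = toConv (mulRight R x ∘ₗ (f * g).ofConv) := by
  apply WithConv.ofConv_injective
  ext c
  simp only [convMul_apply, comp_apply]
  induction comul (R := R) c using TensorProduct.induction_on with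
  | zero => simp
  | tmul a b => simp [mul_assoc]
  | add a b ha hb => simp only [map_add, ha, hb]

lemma mulLeft_comp_convMul (f g : WithConv (C →ₗ[R] A)) (x : A) :
    toConv (mulLeft R x ∘ₗ f.ofConv) * g = toConv (mulLeft R x ∘ₗ (f * g).ofConv) := by
  apply WithConv.ofConv_injective
  ext c
  simp only [convMul_apply, comp_apply]
  induction comul (R := R) c using TensorProduct.induction_on with
  | zero => simp
  | tmul a b => simp [mul_assoc]
  | add a b ha hb => simp only [map_add, ha, hb]

end LinearMap

namespace Coalgebra

section Convolution

variable {R C : Type*} [CommSemiring R] [Semiring C] [Algebra R C] [CoalgebraStruct R C]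

lemma toConv_comul_eq_includeLeft_mul_includeRight :
    toConv (comul (R := R) (A := C)) =
      toConv (Algebra.TensorProduct.includeLeft : C →ₐ[R] C ⊗[R] C).toLinearMap *
        toConv (Algebra.TensorProduct.includeRight : C →ₐ[R] C ⊗[R] C).toLinearMap := by
  apply WithConv.ofConv_injective
  ext c
  simp only [convMul_apply]
  induction comul (R := R) c using TensorProduct.induction_on with
  | zero => simp only [map_zero]
  | tmul a b =>
    simp only [map_tmul, AlgHom.toLinearMap_apply, Algebra.TensorProduct.includeLeft_apply,
      Algebra.TensorProduct.includeRight_apply, mul'_apply, Algebra.TensorProduct.tmul_mul_tmul,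
      mul_one, one_mul]
  | add a b ha hb => simp only [map_add]; rw [← ha, ← hb]

end Convolution

variable {R C : Type*} [CommRing R] [AddCommGroup C] [Module R C] [Coalgebra R C]

lemma applyLeft_comul_applyLeft_comul (f g : Module.Dual R C) (x : C) :
    applyLeft g (comul (applyLeft f (comul (R := R) x))) =
      applyLeft (toConv f * toConv g).ofConv (comul x) := by
  rw [← applyLeft_lTensor, ← coassoc_apply, applyLeft_applyLeft_assoc, applyLeft_rTensor]
  rfl

lemma applyRight_comul_applyRight_comul (f g : Module.Dual R C) (x : C) :
    applyRight f (comul (applyRight g (comul (R := R) x))) =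
      applyRight (toConv f * toConv g).ofConv (comul x) := by
  rw [← applyRight_rTensor, ← coassoc_symm_apply, applyRight_applyRight_assoc_symm,
    applyRight_lTensor]
  rfl

lemma counit_applyLeft_comul (f : Module.Dual R C) (x : C) :
    counit (applyLeft f (comul (R := R) x)) = f x := by
  rw [← applyLeft_lTensor, lTensor_counit_comul, applyLeft_tmul, smul_eq_mul, mul_one]

lemma counit_applyRight_comul (g : Module.Dual R C) (x : C) :
    counit (applyRight g (comul (R := R) x)) = g x := by
  rw [← applyRight_rTensor, rTensor_counit_comul, applyRight_tmul, smul_eq_mul, mul_one]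

lemma comul_mem_range_lTensor_rightCoeffs [Module.Projective R C] (x : C) {c : C}
    (hc : c ∈ rightCoeffs (comul (R := R) x)) :
    comul c ∈ range ((rightCoeffs (comul (R := R) x)).subtype.lTensor C) := by
  rw [← rightCoeffs_le_iff]
  obtain ⟨f, rfl⟩ := hc
  rintro _ ⟨g, rfl⟩
  exact ⟨_, (applyLeft_comul_applyLeft_comul f g x).symm⟩

lemma comul_mem_range_rTensor_leftCoeffs [Module.Projective R C] (x : C) {c : C}
    (hc : c ∈ leftCoeffs (comul (R := R) x)) :
    comul c ∈ range ((leftCoeffs (comul (R := R) x)).subtype.rTensor C) := by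
  rw [← leftCoeffs_le_iff]
  obtain ⟨g, rfl⟩ := hc
  rintro _ ⟨f, rfl⟩
  exact ⟨_, (applyRight_comul_applyRight_comul f g x).symm⟩

end Coalgebra

namespace HopfAlgebra

variable {R H : Type*} [CommRing R] [Ring H] [HopfAlgebra R H]

lemma includeLeft_comp_antipode_mul_includeLeft :
    toConv ((Algebra.TensorProduct.includeLeft : H →ₐ[R] H ⊗[R] H).toLinearMap ∘ₗ
        antipode R (A := H)) *
      toConv (Algebra.TensorProduct.includeLeft : H →ₐ[R] H ⊗[R] H).toLinearMap = 1 := by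
  have := algHom_comp_convMul_distrib (Algebra.TensorProduct.includeLeft : H →ₐ[R] H ⊗[R] H)
    (toConv (antipode R (A := H))) (toConv LinearMap.id)
  simp only [antipode_mul_id, comp_id] at this
  rw [← toConv_ofConv (_ * _), ← this]
  apply WithConv.ofConv_injective
  ext
  simp

lemma includeRight_mul_includeRight_comp_antipode :
    toConv (Algebra.TensorProduct.includeRight : H →ₐ[R] H ⊗[R] H).toLinearMap *
      toConv ((Algebra.TensorProduct.includeRight : H →ₐ[R] H ⊗[R] H).toLinearMap ∘ₗ
        antipode R (A := H)) = 1 := by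
  have := algHom_comp_convMul_distrib (Algebra.TensorProduct.includeRight : H →ₐ[R] H ⊗[R] H)
    (toConv LinearMap.id) (toConv (antipode R (A := H)))
  simp only [id_mul_antipode, comp_id] at this
  rw [← toConv_ofConv (_ * _), ← this]
  apply WithConv.ofConv_injective
  ext
  simp [Algebra.algebraMap_eq_smul_one, Algebra.TensorProduct.one_def]

end HopfAlgebra

section Integral

variable {R H : Type*} [CommRing R] [Ring H] [HopfAlgebra R H] {t : H}

/- In the convolution algebra of linear maps `H → H ⊗ H`, the map `h ↦ Δ h * Δ t = Δ (h t)`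
equals `h ↦ ε(h) Δ t`; convolving it on the left with `h ↦ S h ⊗ 1` and using
`Δ = (· ⊗ 1) * (1 ⊗ ·)` gives both sides. -/
theorem IsLeftIntegral.one_tmul_mul_comul (ht : IsLeftIntegral R t) (h : H) :
    ((1 : H) ⊗ₜ[R] h) * comul t = (antipode R (A := H) h ⊗ₜ[R] (1 : H)) * comul t := by
  set iLS := toConv ((Algebra.TensorProduct.includeLeft : H →ₐ[R] H ⊗[R] H).toLinearMap ∘ₗ
    antipode R (A := H))
  set iR := (Algebra.TensorProduct.includeRight : H →ₐ[R] H ⊗[R] H).toLinearMap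
  have hcomul : mulRight R (comul (R := R) t) ∘ₗ comul =
      mulRight R (comul t) ∘ₗ (1 : WithConv (H →ₗ[R] H ⊗[R] H)).ofConv := by
    ext h
    rw [LinearMap.convOne_def, ofConv_toConv, comp_apply, comp_apply, comp_apply, mulRight_apply,
      mulRight_apply, ← Bialgebra.comul_mul, ht h, map_smul, Algebra.linearMap_apply,
      Algebra.smul_def]
  have key : mulRight R (comul t) ∘ₗ iR = mulRight R (comul t) ∘ₗ iLS.ofConv := calc
    _ = mulRight R (comul t) ∘ₗ (iLS * toConv comul).ofConv := by
      rw [toConv_comul_eq_includeLeft_mul_includeRight, ← mul_assoc,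
        includeLeft_comp_antipode_mul_includeLeft, one_mul, ofConv_toConv]
    _ = mulRight R (comul t) ∘ₗ (iLS * 1).ofConv := by
      have := convMul_mulRight_comp iLS (toConv comul) (comul t)
      rw [ofConv_toConv, hcomul, convMul_mulRight_comp] at this
      exact congr(ofConv $this).symm
    _ = _ := by rw [mul_one]
  simpa [iLS, iR] using congr($key h)

theorem IsRightIntegral.comul_mul_tmul_one (ht : IsRightIntegral R t) (h : H) :
    comul (R := R) t * (h ⊗ₜ[R] (1 : H)) = comul t * ((1 : H) ⊗ₜ[R] antipode R (A := H) h) := by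
  set iRS := toConv ((Algebra.TensorProduct.includeRight : H →ₐ[R] H ⊗[R] H).toLinearMap ∘ₗ
    antipode R (A := H))
  set iL := (Algebra.TensorProduct.includeLeft : H →ₐ[R] H ⊗[R] H).toLinearMap
  have hcomul : mulLeft R (comul (R := R) t) ∘ₗ comul =
      mulLeft R (comul t) ∘ₗ (1 : WithConv (H →ₗ[R] H ⊗[R] H)).ofConv := by
    ext h
    rw [LinearMap.convOne_def, ofConv_toConv, comp_apply, comp_apply, comp_apply, mulLeft_apply,
      mulLeft_apply, ← Bialgebra.comul_mul, ht h, map_smul, Algebra.linearMap_apply,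
      ← Algebra.commutes, Algebra.smul_def]
  have key : mulLeft R (comul t) ∘ₗ iL = mulLeft R (comul t) ∘ₗ iRS.ofConv := calc
    _ = mulLeft R (comul t) ∘ₗ (toConv comul * iRS).ofConv := by
      rw [toConv_comul_eq_includeLeft_mul_includeRight, mul_assoc,
        includeRight_mul_includeRight_comp_antipode, mul_one, ofConv_toConv]
    _ = mulLeft R (comul t) ∘ₗ (1 * iRS).ofConv := by
      have := mulLeft_comp_convMul (toConv comul) iRS (comul t)
      rw [ofConv_toConv, hcomul, mulLeft_comp_convMul] at this
      exact congr(ofConv $this).symm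
    _ = _ := by rw [one_mul]
  simpa [iL, iRS] using congr($key h)

theorem IsLeftIntegral.mul_mem_rightCoeffs (ht : IsLeftIntegral R t) (h : H) {c : H}
    (hc : c ∈ rightCoeffs (comul (R := R) t)) : h * c ∈ rightCoeffs (comul (R := R) t) := by
  obtain ⟨f, rfl⟩ := hc
  refine ⟨f ∘ₗ mulLeft R (antipode R h), ?_⟩
  dsimp only
  rw [← applyLeft_rTensor, ← Algebra.TensorProduct.tmul_one_mul_eq_rTensor,
    ← ht.one_tmul_mul_comul, Algebra.TensorProduct.one_tmul_mul_eq_lTensor, applyLeft_lTensor,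
    mulLeft_apply]

theorem IsRightIntegral.mul_mem_leftCoeffs (ht : IsRightIntegral R t) (h : H) {c : H}
    (hc : c ∈ leftCoeffs (comul (R := R) t)) : c * h ∈ leftCoeffs (comul (R := R) t) := by
  obtain ⟨g, rfl⟩ := hc
  refine ⟨g ∘ₗ mulRight R (antipode R h), ?_⟩
  dsimp only
  rw [← applyRight_lTensor, ← Algebra.TensorProduct.mul_one_tmul_eq_lTensor,
    ← ht.comul_mul_tmul_one, Algebra.TensorProduct.mul_tmul_one_eq_rTensor, applyRight_rTensor,
    mulRight_apply]

theorem IsLeftIntegral.smul_mem_rightCoeffs [Module.Projective R H] (ht : IsLeftIntegral R t)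
    (f : Module.Dual R H) (x : H) : f t • x ∈ rightCoeffs (comul (R := R) t) := by
  obtain ⟨w, hw⟩ := comul_mem_range_lTensor_rightCoeffs t (applyLeft_mem_rightCoeffs f (comul t))
  have hunit : f t • (1 : H) ∈ rightCoeffs (comul (R := R) t) := by
    rw [← counit_applyLeft_comul, ← Algebra.algebraMap_eq_smul_one,
      ← mul_antipode_rTensor_comul_apply, ← hw]
    clear hw
    induction w using TensorProduct.induction_on with
    | zero => simp
    | tmul a c => simpa using ht.mul_mem_rightCoeffs (antipode R a) c.2
    | add w₁ w₂ h₁ h₂ => simpa only [map_add] using add_mem h₁ h₂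
  simpa using ht.mul_mem_rightCoeffs x hunit

theorem IsRightIntegral.smul_mem_leftCoeffs [Module.Projective R H] (ht : IsRightIntegral R t)
    (g : Module.Dual R H) (x : H) : g t • x ∈ leftCoeffs (comul (R := R) t) := by
  obtain ⟨w, hw⟩ := comul_mem_range_rTensor_leftCoeffs t (applyRight_mem_leftCoeffs g (comul t))
  have hunit : g t • (1 : H) ∈ leftCoeffs (comul (R := R) t) := by
    rw [← counit_applyRight_comul, ← Algebra.algebraMap_eq_smul_one,
      ← mul_antipode_lTensor_comul_apply, ← hw]
    clear hw
    induction w using TensorProduct.induction_on with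
    | zero => simp
    | tmul c a => simpa using ht.mul_mem_leftCoeffs (antipode R a) c.2
    | add w₁ w₂ h₁ h₂ => simpa only [map_add] using add_mem h₁ h₂
  simpa using ht.mul_mem_leftCoeffs x hunit

end Integral

theorem hopf_over_product_of_domains_finite (ι : Type) [Fintype ι] (Rf : ι → Type u)
    [∀ i, CommRing (Rf i)] [∀ i, IsDomain (Rf i)] (H : Type v) [Ring H]
    [HopfAlgebra (∀ i, Rf i) H] [Module.Projective (∀ i, Rf i) H] (t : H)
    (hint : IsLeftIntegral (∀ i, Rf i) t ∨ IsRightIntegral (∀ i, Rf i) t)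
    (hann : ∀ r : ∀ i, Rf i, r • t = 0 → r = 0) :
    Module.Finite (∀ i, Rf i) H := by
  obtain ⟨N, hNfg, hN⟩ : ∃ N : Submodule (∀ i, Rf i) H,
      N.FG ∧ ∀ (f : Module.Dual (∀ i, Rf i) H) (x : H), f t • x ∈ N := by
    rcases hint with hL | hR
    · obtain ⟨N, hNfg, hle⟩ := exists_fg_rightCoeffs_le (comul (R := ∀ i, Rf i) t)
      exact ⟨N, hNfg, fun f x ↦ hle (hL.smul_mem_rightCoeffs f x)⟩
    · obtain ⟨N, hNfg, hle⟩ := exists_fg_leftCoeffs_le (comul (R := ∀ i, Rf i) t)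
      exact ⟨N, hNfg, fun f x ↦ hle (hR.smul_mem_leftCoeffs f x)⟩
  have hevalt : (range (Module.Dual.eval (∀ i, Rf i) H t)).annihilator = ⊥ := by
    refine eq_bot_iff.mpr fun a ha ↦
      hann a ((Module.forall_dual_apply_eq_zero_iff (∀ i, Rf i) _).mp fun f ↦ ?_)
    simpa using Submodule.mem_annihilator.mp ha (f t) ⟨f, rfl⟩
  obtain ⟨_, ⟨f, rfl⟩, hf⟩ := Pi.exists_mem_nonZeroDivisors_of_annihilator_eq_bot hevalt
  exact Module.Projective.finite_of_forall_smul_mem hf hNfg (hN f)
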